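/- For all real numbers a, b, c > 1, the symmetric 3×3 matrix M(a,b,c) with entries M₁₁ = (c+ab)/(b−1) + (b+ac)/(c−1), M₁₂ = M₂₁ = (a+b−c+1)/(c−1), M₁₃ = M₃₁ = (a+c−b+1)/(b−1), M₂₂ = (c+ab)/(a−1) + (a+bc)/(c−1), M₂₃ = M₃₂ = (b+c−a+1)/(a−1), M₃₃ = (b+ac)/(a−1) + (a+bc)/(b−1), is positive definite. In particular M₁₁ > 0, M₁₁M₂₂ − M₁₂M₂₁ > 0, and det M(a,b,c) > 0. -/

import Mathlib

/-!
Writing `Qₖ` for a binary quadratic form in the two coordinates other than `k`, the quadratic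
form of `M(a,b,c)` splits as `Q_a/(a-1) + Q_b/(b-1) + Q_c/(c-1)`. Each `Qₖ` is positive definite
because its discriminant is negative: for `x, y, z > 1`,
`(y + xz)(x + yz) - (x + y - z + 1)² = (z-1)(x+y)(x+y+2) + (z-1)²(xy-1) > 0`.
A nonzero vector is nonzero in the coordinates of `Q_c` or of `Q_b`, so `M` is positive definite,
and the minors are determinants of positive definite principal submatrices.
-/

open Real

/-- The symmetric matrix `M(a,b,c)` from the proof of Lemma 2.3. -/
noncomputable def Mmat (a b c : ℝ) : Matrix (Fin 3) (Fin 3) ℝ :=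
  !![(c + a * b) / (b - 1) + (b + a * c) / (c - 1),
       (a + b - c + 1) / (c - 1), (a + c - b + 1) / (b - 1);
     (a + b - c + 1) / (c - 1),
       (c + a * b) / (a - 1) + (a + b * c) / (c - 1), (b + c - a + 1) / (a - 1);
     (a + c - b + 1) / (b - 1), (b + c - a + 1) / (a - 1),
       (b + a * c) / (a - 1) + (a + b * c) / (b - 1)]

open Matrix

open scoped ComplexOrder in
theorem Matrix.PosDef.mul_sub_mul_pos {n 𝕜 : Type*} [Fintype n] [DecidableEq n] [RCLike 𝕜]
    {A : Matrix n n 𝕜} (hA : A.PosDef) {i j : n} (hij : i ≠ j) :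
    0 < A i i * A j j - A i j * A j i := by
  have hinj : Function.Injective ![i, j] := by
    intro k l
    fin_cases k <;> fin_cases l <;> simp [hij, hij.symm]
  have h := (hA.submatrix hinj).det_pos
  rw [det_fin_two] at h
  simpa using h

theorem binary_quadratic_pos {Q P R u v : ℝ} (hQ : 0 < Q) (hD : P ^ 2 < Q * R)
    (huv : u ≠ 0 ∨ v ≠ 0) : 0 < Q * u ^ 2 + 2 * P * u * v + R * v ^ 2 := by
  have key : Q * (Q * u ^ 2 + 2 * P * u * v + R * v ^ 2) =
      (Q * u + P * v) ^ 2 + (Q * R - P ^ 2) * v ^ 2 := by ring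
  rcases eq_or_ne v 0 with rfl | hv
  · have hu : u ≠ 0 := huv.resolve_right (not_not.mpr rfl)
    have : 0 < u ^ 2 := by positivity
    simpa using mul_pos hQ this
  · refine pos_of_mul_pos_right (key ▸ ?_) hQ.le
    have : 0 < (Q * R - P ^ 2) * v ^ 2 := mul_pos (sub_pos.mpr hD) (by positivity)
    positivity

theorem sq_lt_mul_of_one_lt {x y z : ℝ} (hx : 1 < x) (hy : 1 < y) (hz : 1 < z) :
    (x + y - z + 1) ^ 2 < (y + x * z) * (x + y * z) := by
  have key : (y + x * z) * (x + y * z) - (x + y - z + 1) ^ 2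
      = (z - 1) * ((x + y) * (x + y + 2)) + (z - 1) ^ 2 * (x * y - 1) := by ring
  have : 0 < (z - 1) * ((x + y) * (x + y + 2)) := by
    have := sub_pos.mpr hz
    positivity
  have : 0 ≤ (z - 1) ^ 2 * (x * y - 1) := mul_nonneg (sq_nonneg _) (by nlinarith)
  linarith

/-- The form that `M(a,b,c)` carries with weight `1/(z-1)`, where `z` is one of `a, b, c` and
`x, y` are the other two in order. -/
def pairForm (x y z u v : ℝ) : ℝ :=
  (y + x * z) * u ^ 2 + 2 * (x + y - z + 1) * u * v + (x + y * z) * v ^ 2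

theorem pairForm_pos {x y z u v : ℝ} (hx : 1 < x) (hy : 1 < y) (hz : 1 < z)
    (huv : u ≠ 0 ∨ v ≠ 0) : 0 < pairForm x y z u v :=
  binary_quadratic_pos (by nlinarith) (sq_lt_mul_of_one_lt hx hy hz) huv

theorem pairForm_nonneg {x y z : ℝ} (hx : 1 < x) (hy : 1 < y) (hz : 1 < z) (u v : ℝ) :
    0 ≤ pairForm x y z u v := by
  by_cases huv : u = 0 ∧ v = 0
  · simp [pairForm, huv.1, huv.2]
  · exact (pairForm_pos hx hy hz (not_and_or.mp huv)).le

theorem dotProduct_Mmat_mulVec (a b c : ℝ) (x : Fin 3 → ℝ) :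
    star x ⬝ᵥ (Mmat a b c *ᵥ x) = pairForm b c a (x 1) (x 2) / (a - 1)
      + pairForm a c b (x 0) (x 2) / (b - 1) + pairForm a b c (x 0) (x 1) / (c - 1) := by
  simp only [dotProduct, Pi.star_apply, star_trivial, mulVec, Mmat, of_apply, cons_val',
    cons_val_fin_one, Fin.sum_univ_three, cons_val_zero, cons_val_one, cons_val, pairForm]
  ring

theorem Mmat_isHermitian (a b c : ℝ) : (Mmat a b c).IsHermitian := by
  ext i j
  fin_cases i <;> fin_cases j <;> simp [Mmat]

theorem Mmat_posDef {a b c : ℝ} (ha : 1 < a) (hb : 1 < b) (hc : 1 < c) :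
    (Mmat a b c).PosDef := by
  refine .of_dotProduct_mulVec_pos (Mmat_isHermitian a b c) fun x hx => ?_
  rw [dotProduct_Mmat_mulVec]
  have hA := div_nonneg (pairForm_nonneg hb hc ha (x 1) (x 2)) (sub_pos.mpr ha).le
  have hB := div_nonneg (pairForm_nonneg ha hc hb (x 0) (x 2)) (sub_pos.mpr hb).le
  have hC := div_nonneg (pairForm_nonneg ha hb hc (x 0) (x 1)) (sub_pos.mpr hc).le
  by_cases h01 : x 0 = 0 ∧ x 1 = 0
  · have h2 : x 2 ≠ 0 := fun h2 => hx (by ext i; fin_cases i <;> simp [h01.1, h01.2, h2])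
    have := div_pos (pairForm_pos (u := x 0) ha hc hb (Or.inr h2)) (sub_pos.mpr hb)
    linarith
  · have := div_pos (pairForm_pos ha hb hc (not_and_or.mp h01)) (sub_pos.mpr hc)
    linarith

theorem stmt_7 (a b c : ℝ) (ha : 1 < a) (hb : 1 < b) (hc : 1 < c) :
    (Mmat a b c).PosDef ∧
    0 < Mmat a b c 0 0 ∧
    0 < Mmat a b c 0 0 * Mmat a b c 1 1 - Mmat a b c 0 1 * Mmat a b c 1 0 ∧
    0 < (Mmat a b c).det := by
  have hM := Mmat_posDef ha hb hc
  exact ⟨hM, hM.diag_pos, hM.mul_sub_mul_pos (by decide), hM.det_pos⟩
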